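/- Starting from ℤ/2ℤ and performing two successive pushouts—first with ℤ/73ℤ over ℤ/73²ℤ (trivial map into ℤ/2ℤ, canonical surjection onto ℤ/73ℤ), then with ℤ/19ℤ over ℤ/19²ℤ (trivial map into the resulting group, canonical surjection onto ℤ/19ℤ)—the resulting group is isomorphic to ℤ/2ℤ. -/

import Mathlib

open Monoid in
/-- The pushout (amalgamated product) of groups along `f : A →* G` and `g : A →* H`:
the quotient of the free product `G ∗ H` by the normal closure of
`{f(a) * g(a)⁻¹ : a ∈ A}`. -/
def GroupPushout {A G H : Type*} [Group A] [Group G] [Group H]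
    (f : A →* G) (g : A →* H) : Type _ :=
  Coprod G H ⧸ Subgroup.normalClosure
    {x : Coprod G H | ∃ a : A, x = Coprod.inl (f a) * (Coprod.inr (g a))⁻¹}

open Monoid in
instance {A G H : Type*} [Group A] [Group G] [Group H] (f : A →* G) (g : A →* H) :
    Group (GroupPushout f g) :=
  QuotientGroup.Quotient.group _

/-- The canonical reduction `ℤ/n²ℤ → ℤ/nℤ`, written multiplicatively. -/
def zmodRed (n : ℕ) : Multiplicative (ZMod (n ^ 2)) →* Multiplicative (ZMod n) :=
  AddMonoidHom.toMultiplicative (ZMod.castHom (dvd_pow_self n two_ne_zero) (ZMod n)).toAddMonoidHom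

/-- First pushout: `ℤ/2ℤ` with `ℤ/73ℤ` over `ℤ/73²ℤ`
(trivial map into `ℤ/2ℤ`, reduction onto `ℤ/73ℤ`). -/
def FirstPushout : Type :=
  GroupPushout (1 : Multiplicative (ZMod (73 ^ 2)) →* Multiplicative (ZMod 2)) (zmodRed 73)

instance : Group FirstPushout := by unfold FirstPushout; infer_instance

/-- Second pushout: the result with `ℤ/19ℤ` over `ℤ/19²ℤ`
(trivial map into `FirstPushout`, reduction onto `ℤ/19ℤ`). -/
def SecondPushout : Type :=
  GroupPushout (1 : Multiplicative (ZMod (19 ^ 2)) →* FirstPushout) (zmodRed 19)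

instance : Group SecondPushout := by unfold SecondPushout; infer_instance
/-! Along the trivial map `A → G` the pushout relations read `g a = 1`, so when `g` is onto they
kill all of `H`, and the pushout collapses to `G`. Both pushouts here are of this kind, with `g` the
reduction `ℤ/n²ℤ → ℤ/nℤ`. -/

open Monoid

namespace GroupPushout

variable {A G H K : Type*} [Group A] [Group G] [Group H] [Group K] {f : A →* G} {g : A →* H}

def mk (f : A →* G) (g : A →* H) : Coprod G H →* GroupPushout f g :=
  QuotientGroup.mk' _

theorem mk_inl_eq_mk_inr (a : A) : mk f g (Coprod.inl (f a)) = mk f g (Coprod.inr (g a)) := by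
  rw [← mul_inv_eq_one, ← map_inv, ← map_mul]
  exact (QuotientGroup.eq_one_iff _).mpr (Subgroup.subset_normalClosure ⟨a, rfl⟩)

def lift (φ : G →* K) (ψ : H →* K) (h : ∀ a, φ (f a) = ψ (g a)) : GroupPushout f g →* K :=
  QuotientGroup.lift _ (Coprod.lift φ ψ) <| Subgroup.normalClosure_le_normal <| by
    rintro _ ⟨a, rfl⟩
    simp [MonoidHom.mem_ker, h]

theorem hom_ext {F F' : GroupPushout f g →* K}
    (h : F.comp (mk f g) = F'.comp (mk f g)) : F = F' :=
  QuotientGroup.monoidHom_ext _ h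

theorem mk_inr_eq_one_of_trivial_left (a : A) : mk (1 : A →* G) g (Coprod.inr (g a)) = 1 := by
  rw [← mk_inl_eq_mk_inr, MonoidHom.one_apply, map_one, map_one]

noncomputable def equivOfTrivialLeft (hg : Function.Surjective g) :
    GroupPushout (1 : A →* G) g ≃* G :=
  MonoidHom.toMulEquiv (lift (MonoidHom.id G) 1 fun _ => rfl) ((mk 1 g).comp Coprod.inl)
    (hom_ext <| Coprod.hom_ext rfl <| MonoidHom.ext fun h => by
      obtain ⟨a, rfl⟩ := hg h
      simp [mk_inr_eq_one_of_trivial_left])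
    rfl

end GroupPushout

theorem zmodRed_surjective (n : ℕ) : Function.Surjective (zmodRed n) :=
  ZMod.ringHom_surjective (ZMod.castHom (dvd_pow_self n two_ne_zero) (ZMod n))

theorem secondPushout_iso_zmod_two :
    Nonempty (SecondPushout ≃* Multiplicative (ZMod 2)) :=
  ⟨(GroupPushout.equivOfTrivialLeft (zmodRed_surjective 19)).trans
    (GroupPushout.equivOfTrivialLeft (zmodRed_surjective 73))⟩
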